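/- arXiv:1909.09249 — 2 statements merged into one kernel-verified Lean document; each statement's English description precedes it below -/
import Mathlib

section
/- Let X be an ℝ^d-valued random variable with E|X|² < ∞, and let x̄* = E[X e^{-βL(X)}]/E[e^{-βL(X)}] where L : ℝ^d → ℝ is measurable with L ≥ L_m and E[e^{-βL(X)}] = M_L > 0. Then E|X - x̄*|² ≤ V + e^{-βL_m} V / M_L, where V = E|X - E X|². -/
open MeasureTheory

/-!
Write `w = e^{-βL(X)}`, so that `x̄*` is the `w`-weighted mean of `X`. The bias–variance identity
`∫ w ‖X - c‖² = ∫ w ‖X - a‖² + (∫ w) ‖a - c‖²`, where `a` is the `w`-weighted mean, gives with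
`w = 1` the decomposition `E‖X - x̄*‖² = V + ‖E X - x̄*‖²`, and with `c = E X` the bound
`M ‖x̄* - E X‖² ≤ E[w ‖X - E X‖²] ≤ e^{-βL_m} V`.
-/

lemma mul_norm_sub_sq_eq {E : Type*} [NormedAddCommGroup E] [InnerProductSpace ℝ E]
    (r : ℝ) (x c : E) :
    r * ‖x - c‖ ^ 2 = r * ‖x‖ ^ 2 - 2 * inner ℝ c (r • x) + r * ‖c‖ ^ 2 := by
  rw [norm_sub_sq_real, inner_smul_right, real_inner_comm]
  ring

namespace MeasureTheory

variable {Ω E : Type*} [MeasurableSpace Ω] {μ : Measure Ω}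
  [NormedAddCommGroup E] [InnerProductSpace ℝ E] {w : Ω → ℝ} {X : Ω → E}

lemma Integrable.mul_norm_sub_sq (hw : Integrable w μ) (hwX : Integrable (fun ω => w ω • X ω) μ)
    (hwX2 : Integrable (fun ω => w ω * ‖X ω‖ ^ 2) μ) (c : E) :
    Integrable (fun ω => w ω * ‖X ω - c‖ ^ 2) μ := by
  simp_rw [mul_norm_sub_sq_eq]
  exact (hwX2.sub ((hwX.const_inner c).const_mul 2)).add (hw.mul_const _)

lemma Integrable.norm_sub_sq [IsFiniteMeasure μ] (hX : Integrable X μ)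
    (hX2 : Integrable (fun ω => ‖X ω‖ ^ 2) μ) (c : E) :
    Integrable (fun ω => ‖X ω - c‖ ^ 2) μ := by
  simpa using (integrable_const 1).mul_norm_sub_sq (by simpa using hX) (by simpa using hX2) c

variable (μ w X) in
noncomputable def weightedMean : E := (∫ ω, w ω ∂μ)⁻¹ • ∫ ω, w ω • X ω ∂μ

variable [CompleteSpace E]

lemma integral_mul_norm_sub_sq (hw : Integrable w μ) (hwX : Integrable (fun ω => w ω • X ω) μ)
    (hwX2 : Integrable (fun ω => w ω * ‖X ω‖ ^ 2) μ) (c : E) :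
    ∫ ω, w ω * ‖X ω - c‖ ^ 2 ∂μ = ∫ ω, w ω * ‖X ω‖ ^ 2 ∂μ
      - 2 * inner ℝ c (∫ ω, w ω • X ω ∂μ) + (∫ ω, w ω ∂μ) * ‖c‖ ^ 2 := by
  have hcross : Integrable (fun ω => 2 * inner ℝ c (w ω • X ω)) μ :=
    (hwX.const_inner c).const_mul 2
  simp_rw [mul_norm_sub_sq_eq]
  rw [integral_add ?_ (hw.mul_const _), integral_sub hwX2 hcross,
    integral_const_mul, integral_inner hwX, integral_mul_const]
  exact hwX2.sub hcross

lemma integral_mul_norm_sub_sq_eq_add (hw : Integrable w μ)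
    (hwX : Integrable (fun ω => w ω • X ω) μ) (hwX2 : Integrable (fun ω => w ω * ‖X ω‖ ^ 2) μ)
    {a : E} (ha : (∫ ω, w ω ∂μ) • a = ∫ ω, w ω • X ω ∂μ) (c : E) :
    ∫ ω, w ω * ‖X ω - c‖ ^ 2 ∂μ
      = ∫ ω, w ω * ‖X ω - a‖ ^ 2 ∂μ + (∫ ω, w ω ∂μ) * ‖a - c‖ ^ 2 := by
  rw [integral_mul_norm_sub_sq hw hwX hwX2 c, integral_mul_norm_sub_sq hw hwX hwX2 a, ← ha,
    inner_smul_right, inner_smul_right, real_inner_self_eq_norm_sq, norm_sub_sq_real,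
    real_inner_comm]
  ring

lemma mul_norm_weightedMean_sub_sq_le (hw : Integrable w μ) (hw0 : 0 ≤ᵐ[μ] w)
    (hwX : Integrable (fun ω => w ω • X ω) μ) (hwX2 : Integrable (fun ω => w ω * ‖X ω‖ ^ 2) μ)
    (c : E) :
    (∫ ω, w ω ∂μ) * ‖weightedMean μ w X - c‖ ^ 2 ≤ ∫ ω, w ω * ‖X ω - c‖ ^ 2 ∂μ := by
  have hnonneg (c : E) : 0 ≤ ∫ ω, w ω * ‖X ω - c‖ ^ 2 ∂μ :=
    integral_nonneg_of_ae <| by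
      filter_upwards [hw0] with ω hω using mul_nonneg hω (sq_nonneg _)
  by_cases hM : ∫ ω, w ω ∂μ = 0
  · simpa [hM] using hnonneg c
  · rw [integral_mul_norm_sub_sq_eq_add hw hwX hwX2 (by rw [smul_inv_smul₀ hM]) c]
    exact le_add_of_nonneg_left (hnonneg _)

lemma integral_norm_sub_sq_eq_add [IsProbabilityMeasure μ] (hX : Integrable X μ)
    (hX2 : Integrable (fun ω => ‖X ω‖ ^ 2) μ) (c : E) :
    ∫ ω, ‖X ω - c‖ ^ 2 ∂μ
      = ∫ ω, ‖X ω - ∫ ω', X ω' ∂μ‖ ^ 2 ∂μ + ‖(∫ ω, X ω ∂μ) - c‖ ^ 2 := by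
  simpa using integral_mul_norm_sub_sq_eq_add (μ := μ) (w := fun _ => 1) (integrable_const 1)
    (by simpa using hX) (by simpa using hX2) (a := ∫ ω, X ω ∂μ) (by simp) c

end MeasureTheory

theorem stmt_3_general {d : ℕ} {Ω : Type*} [MeasurableSpace Ω] (μ : Measure Ω)
    [IsProbabilityMeasure μ]
    (X : Ω → EuclideanSpace ℝ (Fin d)) (L : EuclideanSpace ℝ (Fin d) → ℝ)
    (β : ℝ) (hβ : 0 < β) (Lm : ℝ) (hLm : ∀ x, Lm ≤ L x)
    (hIX : Integrable X μ)
    (hIX2 : Integrable (fun ω => ‖X ω‖ ^ 2) μ)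
    (hI1 : Integrable (fun ω => Real.exp (-β * L (X ω))) μ)
    (hI2 : Integrable (fun ω => Real.exp (-β * L (X ω)) • X ω) μ)
    (M : ℝ) (hM : M = ∫ ω, Real.exp (-β * L (X ω)) ∂μ) (hMpos : 0 < M)
    (xbar : EuclideanSpace ℝ (Fin d))
    (hxbar : xbar = M⁻¹ • ∫ ω, Real.exp (-β * L (X ω)) • X ω ∂μ)
    (V : ℝ) (hV : V = ∫ ω, ‖X ω - ∫ ω', X ω' ∂μ‖ ^ 2 ∂μ) :
    (∫ ω, ‖X ω - xbar‖ ^ 2 ∂μ) ≤ V + Real.exp (-β * Lm) * V / M := by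
  set w : Ω → ℝ := fun ω => Real.exp (-β * L (X ω))
  set m := ∫ ω, X ω ∂μ
  have hw_le (ω : Ω) : w ω ≤ Real.exp (-β * Lm) :=
    Real.exp_le_exp.2 (mul_le_mul_of_nonpos_left (hLm _) (neg_nonpos.2 hβ.le))
  have hwX2 : Integrable (fun ω => w ω * ‖X ω‖ ^ 2) μ :=
    hIX2.bdd_mul hI1.aestronglyMeasurable <| .of_forall fun ω => by
      rw [Real.norm_of_nonneg (Real.exp_pos _).le]; exact hw_le ω
  have hbias : M * ‖xbar - m‖ ^ 2 ≤ ∫ ω, w ω * ‖X ω - m‖ ^ 2 ∂μ := by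
    rw [hxbar, hM]
    exact mul_norm_weightedMean_sub_sq_le hI1 (.of_forall fun ω => (Real.exp_pos _).le) hI2 hwX2 m
  have hweight : ∫ ω, w ω * ‖X ω - m‖ ^ 2 ∂μ ≤ Real.exp (-β * Lm) * V := by
    rw [hV, ← integral_const_mul]
    exact integral_mono (hI1.mul_norm_sub_sq hI2 hwX2 m)
      ((hIX.norm_sub_sq hIX2 m).const_mul _) fun ω => by gcongr; exact hw_le ω
  have hmean : ‖xbar - m‖ ^ 2 ≤ Real.exp (-β * Lm) * V / M := by
    rw [le_div_iff₀ hMpos]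
    linarith
  rw [integral_norm_sub_sq_eq_add hIX hIX2 xbar, ← hV, norm_sub_rev]
  linarith

/-- E|X - x̄*|² ≤ V + e^{-βL_m} V / M_L where V is the variance of X and
M_L = E e^{-βL(X)} is the Gibbs mass. -/
theorem stmt_3 {d : ℕ} {Ω : Type*} [MeasurableSpace Ω] (μ : Measure Ω)
    [IsProbabilityMeasure μ]
    (X : Ω → EuclideanSpace ℝ (Fin d)) (L : EuclideanSpace ℝ (Fin d) → ℝ)
    (hL : Measurable L) (β : ℝ) (hβ : 0 < β) (Lm : ℝ) (hLm : ∀ x, Lm ≤ L x)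
    (hIX : Integrable X μ)
    (hIX2 : Integrable (fun ω => ‖X ω‖ ^ 2) μ)
    (hI1 : Integrable (fun ω => Real.exp (-β * L (X ω))) μ)
    (hI2 : Integrable (fun ω => Real.exp (-β * L (X ω)) • X ω) μ)
    (M : ℝ) (hM : M = ∫ ω, Real.exp (-β * L (X ω)) ∂μ) (hMpos : 0 < M)
    (xbar : EuclideanSpace ℝ (Fin d))
    (hxbar : xbar = M⁻¹ • ∫ ω, Real.exp (-β * L (X ω)) • X ω ∂μ)
    (V : ℝ) (hV : V = ∫ ω, ‖X ω - ∫ ω', X ω' ∂μ‖ ^ 2 ∂μ) :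
    (∫ ω, ‖X ω - xbar‖ ^ 2 ∂μ) ≤ V + Real.exp (-β * Lm) * V / M :=
  stmt_3_general μ X L β hβ Lm hLm hIX hIX2 hI1 hI2 M hM hMpos xbar hxbar V hV
end

section
/- Let X be an ℝ^d-valued random variable with E|X|² < ∞, β > 0, and L : ℝ^d → ℝ measurable with L ≥ L_m and M = E e^{-βL(X)} > 0. Let x̄* = E[Xe^{-βL(X)}]/M. Then |E X - x̄*| ≤ e^{-βL_m/2} √(V/M), where V = E|X - E X|². -/
/-!
With `w = e^{-βL(X)}` one has `E X - x̄* = M⁻¹ ∫ w (E X - X)`. Split `w = √w · √w`,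
bound one factor by `√(sup w) ≤ e^{-βL_m/2}` and apply Cauchy–Schwarz to the rest:
`∫ √w · |X - E X| ≤ √(∫ w) √V = √M √V`.
-/

open MeasureTheory Real

section

variable {Ω : Type*} [MeasurableSpace Ω] {μ : Measure Ω}

theorem integral_mul_le_sqrt_mul_sqrt_of_nonneg {f g : Ω → ℝ} (hf : 0 ≤ᵐ[μ] f)
    (hg : 0 ≤ᵐ[μ] g) (hf2 : MemLp f 2 μ) (hg2 : MemLp g 2 μ) :
    ∫ ω, f ω * g ω ∂μ ≤ √(∫ ω, f ω ^ 2 ∂μ) * √(∫ ω, g ω ^ 2 ∂μ) := by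
  have h := integral_mul_le_Lp_mul_Lq_of_nonneg Real.HolderConjugate.two_two hf hg
    (by simpa using hf2) (by simpa using hg2)
  simpa only [Real.rpow_two, ← Real.sqrt_eq_rpow] using h

theorem integral_mul_le_sqrt_bound_mul_sqrt_integral {w g : Ω → ℝ} {K : ℝ}
    (hw0 : ∀ ω, 0 ≤ w ω) (hwK : ∀ ω, w ω ≤ K) (hw : Integrable w μ)
    (hg0 : ∀ ω, 0 ≤ g ω) (hg2 : MemLp g 2 μ) :
    ∫ ω, w ω * g ω ∂μ ≤ √K * (√(∫ ω, w ω ∂μ) * √(∫ ω, g ω ^ 2 ∂μ)) := by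
  have hsqrt_sq : ∀ ω, √(w ω) ^ 2 = w ω := fun ω => Real.sq_sqrt (hw0 ω)
  have hsqrt_w : MemLp (fun ω => √(w ω)) 2 μ := by
    rw [memLp_two_iff_integrable_sq hw.aemeasurable.sqrt.aestronglyMeasurable]
    simpa only [hsqrt_sq] using hw
  have hsqrt_wg : Integrable (fun ω => √(w ω) * g ω) μ := hsqrt_w.integrable_mul hg2
  calc ∫ ω, w ω * g ω ∂μ ≤ ∫ ω, √K * (√(w ω) * g ω) ∂μ := by
        refine integral_mono_of_nonneg (.of_forall fun ω => mul_nonneg (hw0 ω) (hg0 ω))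
          (hsqrt_wg.const_mul _) (.of_forall fun ω => ?_)
        have hsqrt_wg0 : 0 ≤ √(w ω) * g ω := mul_nonneg (Real.sqrt_nonneg _) (hg0 ω)
        calc w ω * g ω = √(w ω) * (√(w ω) * g ω) := by
              rw [← mul_assoc, Real.mul_self_sqrt (hw0 ω)]
          _ ≤ √K * (√(w ω) * g ω) := by gcongr; exact hwK ω
    _ = √K * ∫ ω, √(w ω) * g ω ∂μ := integral_const_mul _ _
    _ ≤ √K * (√(∫ ω, w ω ∂μ) * √(∫ ω, g ω ^ 2 ∂μ)) := by
        gcongr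
        simpa only [hsqrt_sq] using integral_mul_le_sqrt_mul_sqrt_of_nonneg
          (.of_forall fun ω => Real.sqrt_nonneg _) (.of_forall hg0) hsqrt_w hg2

variable {E : Type*} [NormedAddCommGroup E] [NormedSpace ℝ E] [CompleteSpace E]

theorem sub_weighted_mean_eq {w : Ω → ℝ} {X : Ω → E} (hw : Integrable w μ)
    (hwX : Integrable (fun ω => w ω • X ω) μ) (hw_ne : ∫ ω, w ω ∂μ ≠ 0) (c : E) :
    c - (∫ ω, w ω ∂μ)⁻¹ • ∫ ω, w ω • X ω ∂μ
      = (∫ ω, w ω ∂μ)⁻¹ • ∫ ω, w ω • (c - X ω) ∂μ := by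
  simp_rw [smul_sub]
  rw [integral_sub (hw.smul_const c) hwX, integral_smul_const, smul_sub, smul_smul,
    inv_mul_cancel₀ hw_ne, one_smul]

theorem norm_integral_sub_weighted_mean_le [IsFiniteMeasure μ]
    {w : Ω → ℝ} {X : Ω → E} {K : ℝ}
    (hw0 : ∀ ω, 0 ≤ w ω) (hwK : ∀ ω, w ω ≤ K) (hw : Integrable w μ)
    (hwX : Integrable (fun ω => w ω • X ω) μ) (hw_pos : 0 < ∫ ω, w ω ∂μ) (hX : MemLp X 2 μ) :
    ‖(∫ ω, X ω ∂μ) - (∫ ω, w ω ∂μ)⁻¹ • ∫ ω, w ω • X ω ∂μ‖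
      ≤ √K * √((∫ ω, ‖X ω - ∫ ω', X ω' ∂μ‖ ^ 2 ∂μ) / ∫ ω, w ω ∂μ) := by
  set W := ∫ ω, w ω ∂μ
  set m := ∫ ω, X ω ∂μ
  have hdev : MemLp (fun ω => ‖X ω - m‖) 2 μ := (hX.sub (memLp_const m)).norm
  calc ‖m - W⁻¹ • ∫ ω, w ω • X ω ∂μ‖ = W⁻¹ * ‖∫ ω, w ω • (m - X ω) ∂μ‖ := by
        rw [sub_weighted_mean_eq hw hwX hw_pos.ne', norm_smul,
          Real.norm_of_nonneg (inv_nonneg.mpr hw_pos.le)]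
    _ ≤ W⁻¹ * ∫ ω, w ω * ‖X ω - m‖ ∂μ := by
        gcongr
        refine (norm_integral_le_integral_norm _).trans_eq
          (integral_congr_ae (.of_forall fun ω => ?_))
        simp only [norm_smul, Real.norm_of_nonneg (hw0 ω), norm_sub_rev]
    _ ≤ W⁻¹ * (√K * (√W * √(∫ ω, ‖X ω - m‖ ^ 2 ∂μ))) := by
        gcongr
        exact integral_mul_le_sqrt_bound_mul_sqrt_integral hw0 hwK hw (fun _ => norm_nonneg _) hdev
    _ = √K * √((∫ ω, ‖X ω - m‖ ^ 2 ∂μ) / W) := by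
        rw [Real.sqrt_div' _ hw_pos.le]
        field_simp
        rw [Real.sq_sqrt hw_pos.le]
        ring

end

theorem stmt_16_general {d : ℕ} {Ω : Type*} [MeasurableSpace Ω] (μ : Measure Ω)
    [IsProbabilityMeasure μ]
    (X : Ω → EuclideanSpace ℝ (Fin d)) (L : EuclideanSpace ℝ (Fin d) → ℝ)
    (β : ℝ) (hβ : 0 < β) (Lm : ℝ) (hLm : ∀ x, Lm ≤ L x)
    (hIX : Integrable X μ)
    (hIX2 : Integrable (fun ω => ‖X ω‖ ^ 2) μ)
    (hI1 : Integrable (fun ω => Real.exp (-β * L (X ω))) μ)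
    (hI2 : Integrable (fun ω => Real.exp (-β * L (X ω)) • X ω) μ)
    (M : ℝ) (hM : M = ∫ ω, Real.exp (-β * L (X ω)) ∂μ) (hMpos : 0 < M)
    (xbar : EuclideanSpace ℝ (Fin d))
    (hxbar : xbar = M⁻¹ • ∫ ω, Real.exp (-β * L (X ω)) • X ω ∂μ)
    (V : ℝ) (hV : V = ∫ ω, ‖X ω - ∫ ω', X ω' ∂μ‖ ^ 2 ∂μ) :
    ‖(∫ ω, X ω ∂μ) - xbar‖ ≤ Real.exp (-β * Lm / 2) * Real.sqrt (V / M) := by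
  have hX : MemLp X 2 μ := (memLp_two_iff_integrable_sq_norm hIX.aestronglyMeasurable).mpr hIX2
  have hweight_le : ∀ ω, Real.exp (-β * L (X ω)) ≤ Real.exp (-β * Lm) := fun ω =>
    Real.exp_le_exp.mpr (by nlinarith [hLm (X ω)])
  subst hM hxbar hV
  rw [Real.exp_half]
  exact norm_integral_sub_weighted_mean_le (fun _ => (Real.exp_pos _).le) hweight_le hI1 hI2
    hMpos hX

/-- Distance between the plain mean and the Gibbs-weighted mean:
|E X - x̄*| ≤ e^{-βL_m/2} √(V/M). -/
theorem stmt_16 {d : ℕ} {Ω : Type*} [MeasurableSpace Ω] (μ : Measure Ω)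
    [IsProbabilityMeasure μ]
    (X : Ω → EuclideanSpace ℝ (Fin d)) (L : EuclideanSpace ℝ (Fin d) → ℝ)
    (hL : Measurable L) (β : ℝ) (hβ : 0 < β) (Lm : ℝ) (hLm : ∀ x, Lm ≤ L x)
    (hIX : Integrable X μ)
    (hIX2 : Integrable (fun ω => ‖X ω‖ ^ 2) μ)
    (hI1 : Integrable (fun ω => Real.exp (-β * L (X ω))) μ)
    (hI2 : Integrable (fun ω => Real.exp (-β * L (X ω)) • X ω) μ)
    (M : ℝ) (hM : M = ∫ ω, Real.exp (-β * L (X ω)) ∂μ) (hMpos : 0 < M)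
    (xbar : EuclideanSpace ℝ (Fin d))
    (hxbar : xbar = M⁻¹ • ∫ ω, Real.exp (-β * L (X ω)) • X ω ∂μ)
    (V : ℝ) (hV : V = ∫ ω, ‖X ω - ∫ ω', X ω' ∂μ‖ ^ 2 ∂μ) :
    ‖(∫ ω, X ω ∂μ) - xbar‖ ≤ Real.exp (-β * Lm / 2) * Real.sqrt (V / M) :=
  stmt_16_general μ X L β hβ Lm hLm hIX hIX2 hI1 hI2 M hM hMpos xbar hxbar V hV
end
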